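/- If g ∈ G_m(a^r u^i v) for some integers r, i and m ∈ ℕ, then g^m lies in the central subgroup ⟨a^(2^(l-1))⟩ of order 2. -/

import Mathlib

namespace ZkDl

def n₁ (l : ℕ) : ℕ := 2 ^ (l - 1) + 1
def n₂ (l : ℕ) : ℕ := 2 ^ (l - 1) - 1

/-- The relations of the presentation
`⟨a, u, v | a^(2^l) = u^k = v^2 = 1, u a u⁻¹ = a^(n₁), v a v = a^(n₂), v u v = u⁻¹⟩`,
with generators `a = 0`, `u = 1`, `v = 2` in `Fin 3`. -/
def rels (l k : ℕ) : Set (FreeGroup (Fin 3)) :=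
  { FreeGroup.of 0 ^ 2 ^ l,
    FreeGroup.of 1 ^ k,
    FreeGroup.of 2 ^ 2,
    FreeGroup.of 1 * FreeGroup.of 0 * (FreeGroup.of 1)⁻¹ * (FreeGroup.of 0 ^ n₁ l)⁻¹,
    FreeGroup.of 2 * FreeGroup.of 0 * FreeGroup.of 2 * (FreeGroup.of 0 ^ n₂ l)⁻¹,
    FreeGroup.of 2 * FreeGroup.of 1 * FreeGroup.of 2 * FreeGroup.of 1 }

/-- The group `Z_{2^l} ⋊ D_k` given by the presentation above. -/
abbrev G (l k : ℕ) : Type := PresentedGroup (rels l k)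

def a (l k : ℕ) : G l k := PresentedGroup.of 0
def u (l k : ℕ) : G l k := PresentedGroup.of 1
def v (l k : ℕ) : G l k := PresentedGroup.of 2

end ZkDl

open ZkDl

/-- The set `G_m(g) = { h ∈ G : ∏_{j=0}^{m-1} h^{-j} g h^j = 1 }`. -/
def Gm (l k : ℕ) (g : G l k) (m : ℕ) : Set (G l k) :=
  {h : G l k | ((List.range m).map (fun j => h ^ (-(j : ℤ)) * g * h ^ (j : ℤ))).prod = 1}

/-!
Let `sign : G → ℤˣ` send `v` to `-1` and `a`, `u` to `1`. Every element of `G` is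
`a ^ s * u ^ t * v ^ e`, so the elements of sign `-1` are the "reflections" `a ^ s * u ^ t * v`,
and a direct computation shows that the square of a reflection is `1` or a power of
`z = a ^ 2 ^ (l - 1)`. The product defining `G_m(g₀)` telescopes to `(g₀ * g⁻¹) ^ m * g ^ m`; since
`g₀` is a reflection, applying `sign` shows that `m` is even, and `g ^ m = (g * g₀⁻¹) ^ m` where one
of `g`, `g * g₀⁻¹` is a reflection. Hence `g ^ m` is a power of `z`. The relations make `z` a
central element with `z ^ 2 = 1`, and the action of `G` on `ZMod (2 ^ l)` by `x ↦ x + 1`,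
`x ↦ n₁ x`, `x ↦ n₂ x` shows `z ≠ 1`.
-/

theorem List.prod_map_range_zpow_neg_mul_mul_zpow {Γ : Type*} [Group Γ] (g h : Γ) (m : ℕ) :
    ((List.range m).map fun j : ℕ ↦ h ^ (-(j : ℤ)) * g * h ^ (j : ℤ)).prod =
      (g * h⁻¹) ^ m * h ^ m := by
  induction m with
  | zero => simp
  | succ m ih =>
    rw [List.range_succ, List.map_append, List.prod_append, ih]
    simp only [List.map_cons, List.map_nil, List.prod_cons, List.prod_nil, mul_one]
    rw [pow_succ, pow_succ]
    group

namespace ZkDl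

section Relations

variable {l k : ℕ} {Γ : Type*} [Group Γ] {x y w : Γ}

theorem lift_rels_eq_one (hx : x ^ 2 ^ l = 1) (hy : y ^ k = 1) (hw : w ^ 2 = 1)
    (hyx : y * x * y⁻¹ = x ^ n₁ l) (hwx : w * x * w = x ^ n₂ l) (hwy : w * y * w = y⁻¹) :
    ∀ r ∈ rels l k, FreeGroup.lift ![x, y, w] r = 1 := by
  rintro r (rfl | rfl | rfl | rfl | rfl | rfl) <;> simp [hx, hy, hw, hyx, hwx, hwy]

variable (l k)

theorem a_pow_two_pow : a l k ^ 2 ^ l = 1 := PresentedGroup.one_of_mem (Or.inl rfl)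

theorem v_mul_v : v l k * v l k = 1 := by
  rw [← sq]; exact PresentedGroup.one_of_mem (by simp [rels])

theorem v_inv : (v l k)⁻¹ = v l k := inv_eq_of_mul_eq_one_left (v_mul_v l k)

theorem u_mul_a_mul_u_inv : u l k * a l k * (u l k)⁻¹ = a l k ^ n₁ l :=
  PresentedGroup.mk_eq_mk_of_mul_inv_mem (by simp [rels])

theorem v_mul_a_mul_v : v l k * a l k * v l k = a l k ^ n₂ l :=
  PresentedGroup.mk_eq_mk_of_mul_inv_mem (by simp [rels])

theorem v_mul_u_mul_v : v l k * u l k * v l k = (u l k)⁻¹ :=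
  PresentedGroup.mk_eq_mk_of_mul_inv_mem (by simp [rels])

end Relations

section Exponents

variable {l : ℕ}

theorem two_pow_pred_add_self (hl : 1 ≤ l) : (2 : ZMod (2 ^ l)) ^ (l - 1) + 2 ^ (l - 1) = 0 := by
  rw [← two_mul, ← pow_succ', Nat.sub_add_cancel hl]
  exact_mod_cast ZMod.natCast_self (2 ^ l)

theorem two_pow_pred_mul_self (hl : 2 ≤ l) : (2 : ZMod (2 ^ l)) ^ (l - 1) * 2 ^ (l - 1) = 0 := by
  rw [← pow_add, show l - 1 + (l - 1) = l + (l - 2) by omega, pow_add]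
  exact_mod_cast (ZMod.natCast_eq_zero_iff _ _).mpr (dvd_mul_right _ _)

theorem two_pow_pred_ne_zero (hl : 1 ≤ l) : (2 : ZMod (2 ^ l)) ^ (l - 1) ≠ 0 := by
  have hlt : 2 ^ (l - 1) < 2 ^ l := Nat.pow_lt_pow_right one_lt_two (by omega)
  exact_mod_cast (ZMod.natCast_eq_zero_iff _ _).not.mpr
    (Nat.not_dvd_of_pos_of_lt (by positivity) hlt)

theorem cast_n₁ : (n₁ l : ZMod (2 ^ l)) = 2 ^ (l - 1) + 1 := by
  simp [n₁]

theorem cast_n₂ : (n₂ l : ZMod (2 ^ l)) = 2 ^ (l - 1) - 1 := by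
  simp [n₂, Nat.cast_sub Nat.one_le_two_pow]

theorem cast_n₁_mul_self (hl : 2 ≤ l) : (n₁ l : ZMod (2 ^ l)) * n₁ l = 1 := by
  rw [cast_n₁]
  linear_combination two_pow_pred_mul_self hl + two_pow_pred_add_self (by omega : 1 ≤ l)

theorem cast_n₂_mul_self (hl : 2 ≤ l) : (n₂ l : ZMod (2 ^ l)) * n₂ l = 1 := by
  rw [cast_n₂]
  linear_combination two_pow_pred_mul_self hl - two_pow_pred_add_self (by omega : 1 ≤ l)

theorem cast_n₂_mul_n₁ (hl : 2 ≤ l) : (n₂ l : ZMod (2 ^ l)) * n₁ l = -1 := by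
  rw [cast_n₁, cast_n₂]
  linear_combination two_pow_pred_mul_self hl

end Exponents

section Commutation

variable {l k : ℕ}

theorem a_zpow_eq_a_zpow {s t : ℤ} (h : (s : ZMod (2 ^ l)) = t) : a l k ^ s = a l k ^ t := by
  refine zpow_eq_zpow_iff_modEq.mpr (((ZMod.intCast_eq_intCast_iff _ _ _).mp h).of_dvd ?_)
  exact_mod_cast orderOf_dvd_of_pow_eq_one (a_pow_two_pow l k)

theorem u_mul_a_zpow (s : ℤ) : u l k * a l k ^ s = a l k ^ (s * n₁ l) * u l k := by
  rw [← mul_inv_eq_iff_eq_mul, ← conj_zpow, u_mul_a_mul_u_inv, ← zpow_natCast, ← zpow_mul,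
    mul_comm]

theorem v_mul_a_zpow (s : ℤ) : v l k * a l k ^ s = a l k ^ (s * n₂ l) * v l k := by
  rw [← mul_inv_eq_iff_eq_mul, ← conj_zpow, v_inv, v_mul_a_mul_v, ← zpow_natCast, ← zpow_mul,
    mul_comm]

theorem v_mul_u_zpow (t : ℤ) : v l k * u l k ^ t = u l k ^ (-t) * v l k := by
  rw [← mul_inv_eq_iff_eq_mul, ← conj_zpow, v_inv, v_mul_u_mul_v, inv_zpow']

theorem commute_u_sq_a (hl : 2 ≤ l) : Commute (u l k ^ 2) (a l k) := by
  calc u l k ^ 2 * a l k = u l k * (u l k * a l k ^ (1 : ℤ)) := by rw [sq, zpow_one, mul_assoc]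
    _ = a l k ^ ((1 : ℤ) * n₁ l * n₁ l) * u l k ^ 2 := by
      rw [u_mul_a_zpow, ← mul_assoc, u_mul_a_zpow, mul_assoc, ← sq]
    _ = a l k * u l k ^ 2 := by
      rw [a_zpow_eq_a_zpow (t := 1) (by push_cast; rw [one_mul, cast_n₁_mul_self hl]), zpow_one]

theorem u_zpow_mul_a_zpow_of_even (hl : 2 ≤ l) {t : ℤ} (ht : Even t) (s : ℤ) :
    u l k ^ t * a l k ^ s = a l k ^ s * u l k ^ t := by
  obtain ⟨q, rfl⟩ := ht
  rw [← two_mul, zpow_mul]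
  exact ((commute_u_sq_a hl).zpow_zpow q s).eq

theorem u_zpow_mul_a_zpow_of_odd (hl : 2 ≤ l) {t : ℤ} (ht : Odd t) (s : ℤ) :
    u l k ^ t * a l k ^ s = a l k ^ (s * n₁ l) * u l k ^ t := by
  obtain ⟨q, rfl⟩ := ht
  rw [zpow_add_one, mul_assoc, u_mul_a_zpow, ← mul_assoc,
    u_zpow_mul_a_zpow_of_even hl (even_two_mul q), mul_assoc]

end Commutation

section NormalForm

variable {l k : ℕ}

theorem exists_eq_a_zpow_mul_u_zpow_mul_v_pow (hl : 2 ≤ l) (x : G l k) :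
    ∃ (s t : ℤ) (e : ℕ), x = a l k ^ s * u l k ^ t * v l k ^ e := by
  have v_mul (s t : ℤ) (e : ℕ) : v l k * (a l k ^ s * u l k ^ t * v l k ^ e) =
      a l k ^ (s * n₂ l) * u l k ^ (-t) * v l k ^ (e + 1) := by
    rw [← mul_assoc, ← mul_assoc, v_mul_a_zpow, mul_assoc _ (v l k), v_mul_u_zpow, pow_succ']
    group
  have hx : x ∈ Subgroup.closure (Set.range PresentedGroup.of) := by
    rw [PresentedGroup.closure_range_of]; trivial
  induction hx using Subgroup.closure_induction_left with
  | one => exact ⟨0, 0, 0, by simp⟩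
  | mul_left y hy z _ ih =>
    obtain ⟨j, rfl⟩ := hy
    obtain ⟨s, t, e, rfl⟩ := ih
    fin_cases j
    · refine ⟨1 + s, t, e, ?_⟩
      change a l k * _ = _
      rw [zpow_one_add]
      group
    · refine ⟨s * n₁ l, 1 + t, e, ?_⟩
      change u l k * _ = _
      rw [← mul_assoc, ← mul_assoc, u_mul_a_zpow, zpow_one_add]
      group
    · exact ⟨_, _, _, v_mul s t e⟩
  | inv_mul_cancel y hy z _ ih =>
    obtain ⟨j, rfl⟩ := hy
    obtain ⟨s, t, e, rfl⟩ := ih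
    fin_cases j
    · refine ⟨-1 + s, t, e, ?_⟩
      change (a l k)⁻¹ * _ = _
      rw [zpow_add, zpow_neg_one]
      group
    · refine ⟨s * n₁ l, -1 + t, e, ?_⟩
      change (u l k)⁻¹ * _ = _
      rw [← zpow_neg_one, ← mul_assoc, ← mul_assoc, u_zpow_mul_a_zpow_of_odd hl odd_neg_one,
        zpow_add]
      group
    · refine ⟨s * n₂ l, -t, e + 1, ?_⟩
      change (v l k)⁻¹ * _ = _
      rw [v_inv, v_mul]

end NormalForm

section Center

variable (l k) in
def z : G l k := a l k ^ 2 ^ (l - 1)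

variable {l k : ℕ}

theorem z_sq (hl : 1 ≤ l) : z l k ^ 2 = 1 := by
  rw [z, ← pow_mul, ← pow_succ, Nat.sub_add_cancel hl, a_pow_two_pow]

theorem z_mem_center (hl : 2 ≤ l) : z l k ∈ Subgroup.center (G l k) := by
  refine Subgroup.mem_center_iff.mpr fun x ↦ Subgroup.mem_centralizer_singleton_iff.mp
    (PresentedGroup.generated_by _ (Subgroup.centralizer {z l k}) (fun j ↦ ?_) x)
  rw [Subgroup.mem_centralizer_singleton_iff]
  fin_cases j
  · exact (Commute.self_pow (a l k) _).eq
  · change u l k * z l k = z l k * u l k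
    simp only [z, ← zpow_natCast]
    rw [u_mul_a_zpow, a_zpow_eq_a_zpow]
    push_cast
    rw [cast_n₁]
    linear_combination two_pow_pred_mul_self hl
  · change v l k * z l k = z l k * v l k
    simp only [z, ← zpow_natCast]
    rw [v_mul_a_zpow, a_zpow_eq_a_zpow]
    push_cast
    rw [cast_n₂]
    linear_combination two_pow_pred_mul_self hl - two_pow_pred_add_self (by omega : 1 ≤ l)

def affineRep (hl : 2 ≤ l) (hk : 2 ∣ k) : G l k →* Equiv.Perm (ZMod (2 ^ l)) :=
  have hσ : Function.Involutive ((n₁ l : ZMod (2 ^ l)) * ·) := fun x ↦ by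
    simp only [← mul_assoc, cast_n₁_mul_self hl, one_mul]
  have hτ : Function.Involutive ((n₂ l : ZMod (2 ^ l)) * ·) := fun x ↦ by
    simp only [← mul_assoc, cast_n₂_mul_self hl, one_mul]
  have hσ2 : hσ.toPerm ^ 2 = 1 := by rw [sq]; exact Equiv.ext hσ
  have hτ2 : hτ.toPerm ^ 2 = 1 := by rw [sq]; exact Equiv.ext hτ
  PresentedGroup.toGroup (lift_rels_eq_one (l := l) (k := k)
    (x := Equiv.addRight 1) (y := hσ.toPerm) (w := hτ.toPerm)
    (by rw [Equiv.nsmul_addRight, nsmul_one, ZMod.natCast_self, Equiv.addRight_zero])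
    (by obtain ⟨q, rfl⟩ := hk; rw [pow_mul, hσ2, one_pow]) hτ2
    (by ext x; simp [Equiv.nsmul_addRight]; linear_combination x * cast_n₁_mul_self hl)
    (by ext x; simp [Equiv.nsmul_addRight]; linear_combination x * cast_n₂_mul_self hl)
    (by ext x; simp; linear_combination (n₁ l : ZMod (2 ^ l)) * x * cast_n₂_mul_self hl))

theorem z_ne_one (hl : 2 ≤ l) (hk : 2 ∣ k) : z l k ≠ 1 := by
  intro h
  have ha : affineRep hl hk (a l k) = Equiv.addRight 1 := rfl
  have h0 := DFunLike.congr_fun (congrArg (affineRep hl hk) h) 0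
  rw [z, map_pow, ha, Equiv.nsmul_addRight, map_one] at h0
  simp only [Equiv.coe_addRight, zero_add, nsmul_eq_mul, mul_one, Equiv.Perm.coe_one, id_eq,
    Nat.cast_pow, Nat.cast_ofNat] at h0
  exact two_pow_pred_ne_zero (by omega) h0

end Center

section Reflections

variable (l k) in
def sign : G l k →* ℤˣ :=
  PresentedGroup.toGroup (lift_rels_eq_one (l := l) (k := k) (x := 1) (y := 1) (w := -1)
    (by simp) (by simp) (by simp) (by simp) (by simp) (by simp))

variable {l k : ℕ}

theorem sign_a_zpow_mul_u_zpow_mul_v_pow (s t : ℤ) (e : ℕ) :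
    sign l k (a l k ^ s * u l k ^ t * v l k ^ e) = (-1) ^ e := by
  simp only [map_mul, map_zpow, map_pow]
  change (1 : ℤˣ) ^ s * 1 ^ t * (-1) ^ e = _
  simp

theorem sq_a_zpow_mul_u_zpow_mul_v_mem_zpowers (hl : 2 ≤ l) (s t : ℤ) :
    (a l k ^ s * u l k ^ t * v l k) ^ 2 ∈ Subgroup.zpowers (z l k) := by
  have hsq : (a l k ^ s * u l k ^ t * v l k) ^ 2 =
      a l k ^ s * (u l k ^ t * a l k ^ (s * n₂ l) * u l k ^ (-t)) := by
    rw [sq]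
    simp only [mul_assoc]
    rw [← mul_assoc (v l k), v_mul_a_zpow, mul_assoc, ← mul_assoc (v l k), v_mul_u_zpow,
      mul_assoc, v_mul_v, mul_one]
  rcases Int.even_or_odd t with ht | ht
  · rw [hsq, u_zpow_mul_a_zpow_of_even hl ht, mul_assoc, ← zpow_add, add_neg_cancel, zpow_zero,
      mul_one, ← zpow_add]
    refine Subgroup.mem_zpowers_iff.mpr ⟨s, ?_⟩
    rw [z, ← zpow_natCast, ← zpow_mul]
    apply a_zpow_eq_a_zpow
    push_cast
    rw [cast_n₂]
    ring
  · rw [hsq, u_zpow_mul_a_zpow_of_odd hl ht, mul_assoc, ← zpow_add, add_neg_cancel, zpow_zero,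
      mul_one, ← zpow_add, a_zpow_eq_a_zpow (t := 0), zpow_zero]
    · exact Subgroup.one_mem _
    · push_cast
      rw [mul_assoc, cast_n₂_mul_n₁ hl]
      ring

theorem sq_mem_zpowers_z_of_sign_eq_neg_one (hl : 2 ≤ l) {x : G l k} (hx : sign l k x = -1) :
    x ^ 2 ∈ Subgroup.zpowers (z l k) := by
  obtain ⟨s, t, e, rfl⟩ := exists_eq_a_zpow_mul_u_zpow_mul_v_pow hl x
  rw [sign_a_zpow_mul_u_zpow_mul_v_pow, neg_one_pow_eq_neg_one_iff_odd (by decide)] at hx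
  obtain ⟨q, rfl⟩ := hx
  rw [pow_succ (v l k), pow_mul, sq (v l k), v_mul_v, one_pow, one_mul]
  exact sq_a_zpow_mul_u_zpow_mul_v_mem_zpowers hl s t

end Reflections

variable {l k : ℕ}

-- `Gm` is elaborated with `List.range m` pushed into `List ℤ` through the list monad.
theorem mem_Gm_iff {g h : G l k} {m : ℕ} : h ∈ Gm l k g m ↔ (g * h⁻¹) ^ m * h ^ m = 1 := by
  rw [← List.prod_map_range_zpow_neg_mul_mul_zpow]
  simp only [Gm, zpow_neg, List.pure_def, List.bind_eq_flatMap, List.map_eq_flatMap,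
    List.flatMap_assoc, List.flatMap_cons, zpow_natCast, List.flatMap_nil, List.append_nil,
    Set.mem_ofPred_eq]

theorem pow_mem_zpowers_z_of_mem_Gm (hl : 2 ≤ l) {g₀ g : G l k} {m : ℕ}
    (h₀ : sign l k g₀ = -1) (hg : g ∈ Gm l k g₀ m) : g ^ m ∈ Subgroup.zpowers (z l k) := by
  have htel : (g₀ * g⁻¹) ^ m * g ^ m = 1 := mem_Gm_iff.mp hg
  obtain ⟨j, rfl⟩ : Even m := by
    have h := congrArg (sign l k) htel
    rwa [map_mul, map_pow, map_pow, ← mul_pow, map_mul, map_inv, inv_mul_cancel_right, h₀,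
      map_one, neg_one_pow_eq_one_iff_even (by decide)] at h
  obtain ⟨x, hx, hxm⟩ : ∃ x, sign l k x = -1 ∧ g ^ (j + j) = x ^ (j + j) := by
    rcases Int.units_eq_one_or (sign l k g) with h | h
    · refine ⟨g * g₀⁻¹, by simp [h, h₀], ?_⟩
      rw [eq_inv_of_mul_eq_one_right htel, ← inv_pow, mul_inv_rev, inv_inv]
    · exact ⟨g, h, rfl⟩
  rw [hxm, ← two_mul, pow_mul]
  exact Subgroup.pow_mem _ (sq_mem_zpowers_z_of_sign_eq_neg_one hl hx) j

end ZkDl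

theorem pow_mem_central_subgroup (l k : ℕ) (hl : 3 ≤ l) (hk : 4 ∣ k)
    (r i : ℤ) (m : ℕ) (g : G l k)
    (hg : g ∈ Gm l k (a l k ^ r * u l k ^ i * v l k) m) :
    g ^ m ∈ Subgroup.closure {a l k ^ (2 ^ (l - 1))} ∧
    Subgroup.closure {a l k ^ (2 ^ (l - 1))} ≤ Subgroup.center (G l k) ∧
    Nat.card (Subgroup.closure {a l k ^ (2 ^ (l - 1))} : Subgroup (G l k)) = 2 := by
  have hl₂ : 2 ≤ l := by omega
  have h₀ : sign l k (a l k ^ r * u l k ^ i * v l k) = -1 := by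
    simpa only [pow_one] using sign_a_zpow_mul_u_zpow_mul_v_pow (l := l) (k := k) r i 1
  rw [← Subgroup.zpowers_eq_closure, Nat.card_zpowers]
  exact ⟨pow_mem_zpowers_z_of_mem_Gm hl₂ h₀ hg, Subgroup.zpowers_le.mpr (z_mem_center hl₂),
    orderOf_eq_prime (z_sq (by omega)) (z_ne_one hl₂ (dvd_trans (by norm_num) hk))⟩
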